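/- arXiv:1810.00409 — 2 statements merged into one kernel-verified Lean document; each statement's English description precedes it below -/
import Mathlib

section
/- Let n ≥ 3 be odd and let K be the Markov kernel on {0,…,n-1} of the quantum sl₂ tensor chain: K(0,1)=1, K(a,a-1) = a/(2(a+1)), K(a,a+1) = (a+2)/(2(a+1)) for 1 ≤ a ≤ n-2, K(n-1,n-2) = 1 - 1/n, K(n-1,0) = 1/n, and all other entries 0. For 1 ≤ j ≤ (n-1)/2 and θ = 2πj/n, the vector R_j with R_j(a) = sin((a+1)θ)/(a+1) for 0 ≤ a ≤ n-2 and R_j(n-1) = 0 is a right eigenvector of K with eigenvalue cos(θ). -/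
open scoped BigOperators

/-- The tensor-product Markov kernel on the irreducibles of `u_ξ(sl₂)`, `n` odd. -/
noncomputable def quantumK (n : ℕ) : Fin n → Fin n → ℝ := fun a b =>
  if (a : ℕ) = 0 then (if (b : ℕ) = 1 then 1 else 0)
  else if (a : ℕ) = n - 1 then
    (if (b : ℕ) = n - 2 then 1 - 1 / (n : ℝ) else if (b : ℕ) = 0 then 1 / (n : ℝ) else 0)
  else if (b : ℕ) = (a : ℕ) - 1 then ((a : ℕ) : ℝ) / (2 * ((a : ℕ) + 1 : ℝ))
  else if (b : ℕ) = (a : ℕ) + 1 then ((a : ℕ) + 2 : ℝ) / (2 * ((a : ℕ) + 1 : ℝ))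
  else 0

lemma sin_three_term (x θ : ℝ) :
    Real.sin (x - θ) + Real.sin (x + θ) = 2 * Real.cos θ * Real.sin x := by
  rw [Real.sin_sub, Real.sin_add]; ring

theorem quantum_right_eigenvector (n : ℕ) (hn : 3 ≤ n) (hodd : Odd n)
    (j : ℕ) (hj1 : 1 ≤ j) (hj2 : j ≤ (n - 1) / 2)
    (θ : ℝ) (hθ : θ = 2 * Real.pi * j / n)
    (R : Fin n → ℝ)
    (hR : ∀ a : Fin n, R a = if (a : ℕ) = n - 1 then 0
      else Real.sin (((a : ℕ) + 1 : ℝ) * θ) / ((a : ℕ) + 1 : ℝ)) :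
    ∀ a : Fin n, ∑ b, quantumK n a b * R b = Real.cos θ * R a := by
  have hn0 : (n : ℝ) ≠ 0 := by positivity
  have hsinn : Real.sin ((n : ℝ) * θ) = 0 := by
    have h : (n : ℝ) * θ = ((2 * j : ℕ) : ℝ) * Real.pi := by
      rw [hθ]; push_cast; field_simp
    rw [h, Real.sin_nat_mul_pi]
  have hcosn : Real.cos ((n : ℝ) * θ) = 1 := by
    have h : (n : ℝ) * θ = (j : ℕ) * (2 * Real.pi) := by
      rw [hθ]; field_simp
    rw [h, Real.cos_nat_mul_two_pi]
  intro a
  by_cases ha0 : (a : ℕ) = 0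
  · -- a = 0 : only nonzero term at b = 1
    have h1 : (1 : ℕ) < n := by omega
    rw [Finset.sum_eq_single (⟨1, h1⟩ : Fin n)]
    · have hK : quantumK n a ⟨1, h1⟩ = 1 := by simp [quantumK, ha0]
      have hR1 : R ⟨1, h1⟩ = Real.sin (2 * θ) / 2 := by
        rw [hR]; simp only [Fin.val_mk]
        rw [if_neg (by omega)]
        norm_num
      have hRa : R a = Real.sin θ := by
        rw [hR, if_neg (by omega), ha0]; norm_num
      rw [hK, hR1, hRa, Real.sin_two_mul]; ring
    · intro b _ hb
      have hb1 : (b : ℕ) ≠ 1 := by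
        intro h; apply hb; exact Fin.ext h
      simp [quantumK, ha0, hb1]
    · intro h; exact absurd (Finset.mem_univ _) h
  · by_cases han : (a : ℕ) = n - 1
    · -- a = n - 1 : support {n-2, 0}
      have h2 : n - 2 < n := by omega
      have h0 : 0 < n := by omega
      set b2 : Fin n := ⟨n - 2, h2⟩
      set b0 : Fin n := ⟨0, h0⟩
      have hne : b2 ≠ b0 := by
        refine Fin.ne_of_val_ne ?_
        simp only [b2, b0, Fin.val_mk]; omega
      have hsum : ∑ b, quantumK n a b * R b
          = quantumK n a b2 * R b2 + quantumK n a b0 * R b0 := by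
        have hsub : ∑ b ∈ ({b2, b0} : Finset (Fin n)), quantumK n a b * R b
            = ∑ b, quantumK n a b * R b := by
          apply Finset.sum_subset (Finset.subset_univ _)
          intro x _ hx
          simp only [Finset.mem_insert, Finset.mem_singleton] at hx
          push_neg at hx
          have hx2 : (x : ℕ) ≠ n - 2 := fun h => hx.1 (Fin.ext h)
          have hx0 : (x : ℕ) ≠ 0 := fun h => hx.2 (Fin.ext h)
          have hn1' : n - 1 ≠ 0 := by omega
          simp [quantumK, ha0, han, hx2, hx0, hn1']
        rw [← hsub, Finset.sum_pair hne]
      rw [hsum]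
      have hn1' : n - 1 ≠ 0 := by omega
      have hK2 : quantumK n a b2 = 1 - 1 / (n : ℝ) := by
        simp [quantumK, ha0, han, b2, hn1']
      have hK0 : quantumK n a b0 = 1 / (n : ℝ) := by
        have h21 : (0 : ℕ) ≠ n - 2 := by omega
        simp [quantumK, ha0, han, b0, hn1', h21]
      have hRa : R a = 0 := by rw [hR, if_pos han]
      have hs : Real.sin (((n : ℝ) - 1) * θ) = -Real.sin θ := by
        have : ((n : ℝ) - 1) * θ = (n : ℝ) * θ - θ := by ring
        rw [this, Real.sin_sub, hsinn, hcosn]; ring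
      have hRb2 : R b2 = -Real.sin θ / ((n : ℝ) - 1) := by
        rw [hR]; simp only [b2, Fin.val_mk]
        rw [if_neg (by omega)]
        have hc : ((n - 2 : ℕ) : ℝ) + 1 = (n : ℝ) - 1 := by
          have : ((n - 2 : ℕ) : ℝ) = (n : ℝ) - 2 := by
            push_cast [Nat.cast_sub (by omega : 2 ≤ n)]; ring
          rw [this]; ring
        rw [hc, hs]
      have hRb0 : R b0 = Real.sin θ := by
        rw [hR]; simp only [b0, Fin.val_mk]
        rw [if_neg (by omega)]
        norm_num
      rw [hK2, hK0, hRa, hRb2, hRb0]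
      have hn1 : (n : ℝ) - 1 ≠ 0 := by
        have : (3 : ℝ) ≤ (n : ℝ) := by exact_mod_cast hn
        linarith
      field_simp
      ring
    · -- middle case : 1 ≤ a ≤ n - 2
      have ha1 : 1 ≤ (a : ℕ) := by omega
      have ha2 : (a : ℕ) ≤ n - 2 := by
        have := a.isLt; omega
      have hm : (a : ℕ) - 1 < n := by omega
      have hp : (a : ℕ) + 1 < n := by omega
      set bm : Fin n := ⟨(a : ℕ) - 1, hm⟩
      set bp : Fin n := ⟨(a : ℕ) + 1, hp⟩
      have hne : bm ≠ bp := by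
        refine Fin.ne_of_val_ne ?_
        simp only [bm, bp, Fin.val_mk]; omega
      have hsum : ∑ b, quantumK n a b * R b
          = quantumK n a bm * R bm + quantumK n a bp * R bp := by
        have hsub : ∑ b ∈ ({bm, bp} : Finset (Fin n)), quantumK n a b * R b
            = ∑ b, quantumK n a b * R b := by
          apply Finset.sum_subset (Finset.subset_univ _)
          intro x _ hx
          simp only [Finset.mem_insert, Finset.mem_singleton] at hx
          push_neg at hx
          have hxm : (x : ℕ) ≠ (a : ℕ) - 1 := fun h => hx.1 (Fin.ext h)
          have hxp : (x : ℕ) ≠ (a : ℕ) + 1 := fun h => hx.2 (Fin.ext h)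
          simp [quantumK, ha0, han, hxm, hxp]
        rw [← hsub, Finset.sum_pair hne]
      rw [hsum]
      have hKm : quantumK n a bm = ((a : ℕ) : ℝ) / (2 * (((a : ℕ) : ℝ) + 1)) := by
        simp [quantumK, ha0, han, bm]
      have hKp : quantumK n a bp = (((a : ℕ) : ℝ) + 2) / (2 * (((a : ℕ) : ℝ) + 1)) := by
        have h' : (a : ℕ) + 1 ≠ (a : ℕ) - 1 := by omega
        simp [quantumK, ha0, han, bp, h']
      have hRa : R a = Real.sin ((((a : ℕ) : ℝ) + 1) * θ) / (((a : ℕ) : ℝ) + 1) := by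
        rw [hR, if_neg han]
      have hRm : R bm = Real.sin (((a : ℕ) : ℝ) * θ) / ((a : ℕ) : ℝ) := by
        rw [hR]; simp only [bm, Fin.val_mk]
        rw [if_neg (by omega)]
        have hc : (((a : ℕ) - 1 : ℕ) : ℝ) + 1 = ((a : ℕ) : ℝ) := by
          push_cast [Nat.cast_sub ha1]; ring
        rw [hc]
      have hkey : Real.sin (((a : ℕ) : ℝ) * θ) + Real.sin ((((a : ℕ) : ℝ) + 2) * θ)
          = 2 * Real.cos θ * Real.sin ((((a : ℕ) : ℝ) + 1) * θ) := by
        have h1 : ((a : ℕ) : ℝ) * θ = (((a : ℕ) : ℝ) + 1) * θ - θ := by ring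
        have h2 : (((a : ℕ) : ℝ) + 2) * θ = (((a : ℕ) : ℝ) + 1) * θ + θ := by ring
        rw [h1, h2, sin_three_term]
      have haR0 : ((a : ℕ) : ℝ) ≠ 0 := by
        exact_mod_cast (by omega : (a : ℕ) ≠ 0)
      have haR1 : ((a : ℕ) : ℝ) + 1 ≠ 0 := by positivity
      have haR2 : ((a : ℕ) : ℝ) + 2 ≠ 0 := by positivity
      by_cases hap : (a : ℕ) + 1 = n - 1
      · -- a = n - 2, R bp = 0 and sin((a+2)θ) = sin(nθ) = 0
        have hRp : R bp = 0 := by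
          rw [hR]; simp only [bp, Fin.val_mk]; rw [if_pos hap]
        have hsz : Real.sin ((((a : ℕ) : ℝ) + 2) * θ) = 0 := by
          have hc : ((a : ℕ) : ℝ) + 2 = (n : ℝ) := by
            have : (a : ℕ) + 2 = n := by omega
            exact_mod_cast this
          rw [hc, hsinn]
        rw [hsz] at hkey
        rw [hKm, hKp, hRa, hRm, hRp]
        rw [show Real.sin (((a : ℕ) : ℝ) * θ)
            = 2 * Real.cos θ * Real.sin ((((a : ℕ) : ℝ) + 1) * θ) by linarith]
        field_simp
        ring
      · have hRp : R bp = Real.sin ((((a : ℕ) : ℝ) + 2) * θ) / (((a : ℕ) : ℝ) + 2) := by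
          rw [hR]; simp only [bp, Fin.val_mk]
          rw [if_neg hap]
          push_cast; ring_nf
        rw [hKm, hKp, hRa, hRm, hRp]
        rw [show Real.sin ((((a : ℕ) : ℝ) + 2) * θ)
            = 2 * Real.cos θ * Real.sin ((((a : ℕ) : ℝ) + 1) * θ)
              - Real.sin (((a : ℕ) : ℝ) * θ) by linarith]
        field_simp
        ring
end

section
/- Let n ≥ 3 be odd and K the quantum sl₂ tensor chain kernel on {0,…,n-1} as above. For 1 ≤ j ≤ (n-1)/2 and θ = 2πj/n, the row vector L_j with L_j(a) = (a+1)cos((a+1)θ) for 0 ≤ a ≤ n-2 and L_j(n-1) = n/2 satisfies L_j K = cos(θ) L_j. -/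
open scoped BigOperators

private lemma sum_pair' {n : ℕ} (f : Fin n → ℝ) (i j : Fin n) (hij : i ≠ j)
    (h : ∀ a, a ≠ i → a ≠ j → f a = 0) : ∑ a, f a = f i + f j := by
  rw [← Finset.sum_pair hij]
  symm
  apply Finset.sum_subset (Finset.subset_univ _)
  intro x _ hx
  simp only [Finset.mem_insert, Finset.mem_singleton, not_or] at hx
  exact h x hx.1 hx.2

private lemma sum_single' {n : ℕ} (f : Fin n → ℝ) (i : Fin n)
    (h : ∀ a, a ≠ i → f a = 0) : ∑ a, f a = f i := by
  apply Finset.sum_eq_single_of_mem i (Finset.mem_univ i)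
  intro a _ ha; exact h a ha

private lemma cos_sum_id (x θ : ℝ) :
    Real.cos (x * θ) + Real.cos ((x + 2) * θ) = 2 * Real.cos θ * Real.cos ((x + 1) * θ) := by
  rw [show x * θ = (x + 1) * θ - θ by ring, show (x + 2) * θ = (x + 1) * θ + θ by ring,
    Real.cos_add, Real.cos_sub]
  ring

theorem quantum_left_eigenvector (n : ℕ) (hn : 3 ≤ n) (hodd : Odd n)
    (j : ℕ) (hj1 : 1 ≤ j) (hj2 : j ≤ (n - 1) / 2)
    (θ : ℝ) (hθ : θ = 2 * Real.pi * j / n)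
    (L : Fin n → ℝ)
    (hL : ∀ a : Fin n, L a = if (a : ℕ) = n - 1 then (n : ℝ) / 2
      else ((a : ℕ) + 1 : ℝ) * Real.cos (((a : ℕ) + 1 : ℝ) * θ)) :
    ∀ b : Fin n, ∑ a, L a * quantumK n a b = Real.cos θ * L b := by
  have hn0 : (n : ℝ) ≠ 0 := by positivity
  have hNθ : (n : ℝ) * θ = (j : ℝ) * (2 * Real.pi) := by
    rw [hθ]; field_simp
  have hcosn : Real.cos ((n : ℝ) * θ) = 1 := by rw [hNθ]; exact Real.cos_nat_mul_two_pi j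
  have hsinn : Real.sin ((n : ℝ) * θ) = 0 := by
    rw [hNθ, show ((j : ℝ)) * (2 * Real.pi) = ((2 * j : ℕ) : ℝ) * Real.pi by push_cast; ring]
    exact Real.sin_nat_mul_pi (2 * j)
  intro b
  rcases Nat.lt_or_ge (b : ℕ) 1 with hb | hb1
  · -- b = 0
    have hb0 : (b : ℕ) = 0 := by omega
    obtain ⟨i1, hi1⟩ : ∃ i : Fin n, (i : ℕ) = 1 := ⟨⟨1, by omega⟩, rfl⟩
    obtain ⟨i2, hi2⟩ : ∃ i : Fin n, (i : ℕ) = n - 1 := ⟨⟨n - 1, by omega⟩, rfl⟩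
    have hne : i1 ≠ i2 := by intro h; rw [h, hi2] at hi1; omega
    rw [sum_pair' _ i1 i2 hne]
    · have h1 : L i1 = 2 * Real.cos (2 * θ) := by
        rw [hL, hi1, if_neg (by omega)]; norm_num
      have h2 : L i2 = (n : ℝ) / 2 := by
        rw [hL, hi2, if_pos rfl]
      have hK1 : quantumK n i1 b = 1 / 4 := by
        simp only [quantumK]; rw [hi1, hb0]
        rw [if_neg (by omega), if_neg (by omega), if_pos (by omega)]
        norm_num
      have hK2 : quantumK n i2 b = 1 / (n : ℝ) := by
        simp only [quantumK]; rw [hi2, hb0]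
        rw [if_neg (by omega), if_pos rfl, if_neg (by omega), if_pos rfl]
      rw [h1, h2, hK1, hK2, hL b, if_neg (by omega), hb0]
      have h12 : (n : ℝ) / 2 * (1 / n) = 1 / 2 := by field_simp
      rw [h12]
      push_cast
      norm_num
      linear_combination -Real.cos_sq θ
    · intro a ha1 ha2
      have ha1' : (a : ℕ) ≠ 1 := fun h => ha1 (Fin.ext (h.trans hi1.symm))
      have ha2' : (a : ℕ) ≠ n - 1 := fun h => ha2 (Fin.ext (h.trans hi2.symm))
      have hK : quantumK n a b = 0 := by
        simp only [quantumK]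
        split_ifs <;> first | rfl | omega
      rw [hK, mul_zero]
  rcases Nat.lt_or_ge (b : ℕ) (n - 2) with hb2 | hb3
  · -- 1 ≤ b ≤ n - 3 : generic case
    set k : ℕ := (b : ℕ) with hk
    obtain ⟨i1, hi1⟩ : ∃ i : Fin n, (i : ℕ) = k - 1 := ⟨⟨k - 1, by omega⟩, rfl⟩
    obtain ⟨i2, hi2⟩ : ∃ i : Fin n, (i : ℕ) = k + 1 := ⟨⟨k + 1, by omega⟩, rfl⟩
    have hne : i1 ≠ i2 := by intro h; rw [h, hi2] at hi1; omega
    have hck : ((k - 1 : ℕ) : ℝ) = (k : ℝ) - 1 := by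
      rw [Nat.cast_sub hb1]; norm_num
    rw [sum_pair' _ i1 i2 hne]
    · have h1 : L i1 = (k : ℝ) * Real.cos ((k : ℝ) * θ) := by
        rw [hL, hi1, if_neg (by omega), hck]; ring_nf
      have h2 : L i2 = ((k : ℝ) + 2) * Real.cos (((k : ℝ) + 2) * θ) := by
        rw [hL, hi2, if_neg (by omega)]; push_cast; ring_nf
      have hK1 : quantumK n i1 b = ((k : ℝ) + 1) / (2 * (k : ℝ)) := by
        simp only [quantumK]; rw [hi1, ← hk]
        rcases Nat.eq_or_lt_of_le hb1 with h | h
        · rw [if_pos (by omega), if_pos (by omega), ← h]; norm_num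
        · rw [if_neg (by omega), if_neg (by omega), if_neg (by omega), if_pos (by omega), hck]
          ring_nf
      have hK2 : quantumK n i2 b = ((k : ℝ) + 1) / (2 * ((k : ℝ) + 2)) := by
        simp only [quantumK]; rw [hi2, ← hk]
        rw [if_neg (by omega), if_neg (by omega), if_pos (by omega)]
        push_cast; ring_nf
      rw [h1, h2, hK1, hK2, hL b, if_neg (by omega), ← hk]
      have hk0 : (k : ℝ) ≠ 0 := by
        have : (1 : ℕ) ≤ k := hb1
        have : (1 : ℝ) ≤ (k : ℝ) := by exact_mod_cast this
        intro h; linarith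
      have hk2 : (k : ℝ) + 2 ≠ 0 := by positivity
      have e1 : (k : ℝ) * Real.cos ((k : ℝ) * θ) * (((k : ℝ) + 1) / (2 * (k : ℝ)))
          = ((k : ℝ) + 1) / 2 * Real.cos ((k : ℝ) * θ) := by
        field_simp
      have e2 : ((k : ℝ) + 2) * Real.cos (((k : ℝ) + 2) * θ) * (((k : ℝ) + 1) / (2 * ((k : ℝ) + 2)))
          = ((k : ℝ) + 1) / 2 * Real.cos (((k : ℝ) + 2) * θ) := by
        field_simp
      rw [e1, e2]
      have key := cos_sum_id (k : ℝ) θ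
      push_cast
      linear_combination ((k : ℝ) + 1) / 2 * key
    · intro a ha1 ha2
      have ha1' : (a : ℕ) ≠ k - 1 := fun h => ha1 (Fin.ext (h.trans hi1.symm))
      have ha2' : (a : ℕ) ≠ k + 1 := fun h => ha2 (Fin.ext (h.trans hi2.symm))
      have hK : quantumK n a b = 0 := by
        simp only [quantumK]
        split_ifs <;> first | rfl | omega
      rw [hK, mul_zero]
  rcases Nat.lt_or_ge (b : ℕ) (n - 1) with hb4 | hb5
  · -- b = n - 2
    have hbv : (b : ℕ) = n - 2 := by omega
    obtain ⟨i1, hi1⟩ : ∃ i : Fin n, (i : ℕ) = n - 3 := ⟨⟨n - 3, by omega⟩, rfl⟩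
    obtain ⟨i2, hi2⟩ : ∃ i : Fin n, (i : ℕ) = n - 1 := ⟨⟨n - 1, by omega⟩, rfl⟩
    have hne : i1 ≠ i2 := by intro h; rw [h, hi2] at hi1; omega
    have hc3 : ((n - 3 : ℕ) : ℝ) = (n : ℝ) - 3 := by
      rw [Nat.cast_sub hn]; norm_num
    have hc2 : ((n - 2 : ℕ) : ℝ) = (n : ℝ) - 2 := by
      rw [Nat.cast_sub (by omega)]; norm_num
    rw [sum_pair' _ i1 i2 hne]
    · have h1 : L i1 = ((n : ℝ) - 2) * Real.cos (((n : ℝ) - 2) * θ) := by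
        rw [hL, hi1, if_neg (by omega), hc3]; ring_nf
      have h2 : L i2 = (n : ℝ) / 2 := by rw [hL, hi2, if_pos rfl]
      have hK1 : quantumK n i1 b = ((n : ℝ) - 1) / (2 * ((n : ℝ) - 2)) := by
        simp only [quantumK]; rw [hi1, hbv]
        rcases Nat.eq_or_lt_of_le hn with h | h
        · rw [if_pos (by omega), if_pos (by omega), ← h]; norm_num
        · rw [if_neg (by omega), if_neg (by omega), if_neg (by omega), if_pos (by omega), hc3]
          ring_nf
      have hK2 : quantumK n i2 b = 1 - 1 / (n : ℝ) := by
        simp only [quantumK]; rw [hi2, hbv]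
        rw [if_neg (by omega), if_pos rfl, if_pos rfl]
      rw [h1, h2, hK1, hK2, hL b, if_neg (by omega), hbv, hc2]
      have hn2 : (n : ℝ) - 2 ≠ 0 := by
        have : (3 : ℝ) ≤ (n : ℝ) := by exact_mod_cast hn
        intro h; linarith
      have e1 : ((n : ℝ) - 2) * Real.cos (((n : ℝ) - 2) * θ) * (((n : ℝ) - 1) / (2 * ((n : ℝ) - 2)))
          = ((n : ℝ) - 1) / 2 * Real.cos (((n : ℝ) - 2) * θ) := by
        field_simp
      have e2 : (n : ℝ) / 2 * (1 - 1 / (n : ℝ)) = ((n : ℝ) - 1) / 2 := by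
        field_simp
      rw [e1, e2]
      have key := cos_sum_id ((n : ℝ) - 2) θ
      rw [show (n : ℝ) - 2 + 2 = (n : ℝ) by ring, hcosn,
        show (n : ℝ) - 2 + 1 = (n : ℝ) - 1 by ring] at key
      rw [show (n : ℝ) - 2 + 1 = (n : ℝ) - 1 by ring]
      linear_combination ((n : ℝ) - 1) / 2 * key
    · intro a ha1 ha2
      have ha1' : (a : ℕ) ≠ n - 3 := fun h => ha1 (Fin.ext (h.trans hi1.symm))
      have ha2' : (a : ℕ) ≠ n - 1 := fun h => ha2 (Fin.ext (h.trans hi2.symm))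
      have hK : quantumK n a b = 0 := by
        simp only [quantumK]
        split_ifs <;> first | rfl | omega
      rw [hK, mul_zero]
  · -- b = n - 1
    have hbv : (b : ℕ) = n - 1 := by omega
    obtain ⟨i1, hi1⟩ : ∃ i : Fin n, (i : ℕ) = n - 2 := ⟨⟨n - 2, by omega⟩, rfl⟩
    have hc2 : ((n - 2 : ℕ) : ℝ) = (n : ℝ) - 2 := by
      rw [Nat.cast_sub (by omega)]; norm_num
    rw [sum_single' _ i1]
    · have h1 : L i1 = ((n : ℝ) - 1) * Real.cos (((n : ℝ) - 1) * θ) := by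
        rw [hL, hi1, if_neg (by omega), hc2]; ring_nf
      have hK1 : quantumK n i1 b = (n : ℝ) / (2 * ((n : ℝ) - 1)) := by
        simp only [quantumK]; rw [hi1, hbv]
        rw [if_neg (by omega), if_neg (by omega), if_neg (by omega), if_pos (by omega), hc2]
        ring_nf
      rw [h1, hK1, hL b, if_pos hbv]
      have hn1 : (n : ℝ) - 1 ≠ 0 := by
        have : (3 : ℝ) ≤ (n : ℝ) := by exact_mod_cast hn
        intro h; linarith
      have key : Real.cos (((n : ℝ) - 1) * θ) = Real.cos θ := by
        rw [show ((n : ℝ) - 1) * θ = (n : ℝ) * θ - θ by ring, Real.cos_sub, hcosn, hsinn]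
        ring
      rw [key]
      field_simp
    · intro a ha1
      have ha1' : (a : ℕ) ≠ n - 2 := fun h => ha1 (Fin.ext (h.trans hi1.symm))
      have hK : quantumK n a b = 0 := by
        simp only [quantumK]
        split_ifs <;> first | rfl | omega
      rw [hK, mul_zero]
end
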